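/- (Theorem 1, continuous form: RING is roto-translation invariant.) Let f, h : ℝ × ℝ → ℝ, let α : ℝ and d = (d₁, d₂) : ℝ × ℝ, and let g : ℝ × ℝ → ℝ be the roto-translation of f, g p = f (ρ (-α) (p - d)). For u : ℝ × ℝ → ℝ define the correlation map C_u : ℝ → ℝ by C_u k := ∫ θ in Set.Ioc 0 (2 * π), (∫ ω : ℝ, M u (θ + k) ω * M h θ ω). Then ⨆ k : ℝ, C_g k = ⨆ k : ℝ, C_f k. (In fact C_g k = C_f (k - α) for every k, since M g θ ω = M f (θ - α) ω pointwise.) -/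

import Mathlib

open MeasureTheory Real

/-- Radon transform of an image `f : ℝ × ℝ → ℝ`. -/
noncomputable def Radon (f : ℝ × ℝ → ℝ) (θ τ : ℝ) : ℝ :=
  ∫ t : ℝ, f (τ * Real.cos θ - t * Real.sin θ, τ * Real.sin θ + t * Real.cos θ)

/-- Rotation of the plane by angle `α`. -/
noncomputable def ρ (α : ℝ) (p : ℝ × ℝ) : ℝ × ℝ :=
  (p.1 * Real.cos α - p.2 * Real.sin α, p.1 * Real.sin α + p.2 * Real.cos α)

/-- TING of `f`: magnitude of the Fourier integral (along `τ`) of the sinogram row `θ`. -/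
noncomputable def TING (f : ℝ × ℝ → ℝ) (θ ω : ℝ) : ℝ :=
  ‖FourierTransform.fourier (fun τ : ℝ => (Radon f θ τ : ℂ)) ω‖

/-- Correlation map between the TINGs of `u` and `h` at angular shift `k`. -/
noncomputable def corrMap (u h : ℝ × ℝ → ℝ) (k : ℝ) : ℝ :=
  ∫ θ in Set.Ioc 0 (2 * Real.pi), (∫ ω : ℝ, TING u (θ + k) ω * TING h θ ω)

/-!
The line of the Radon transform at angle `θ` and offset `τ` is `t ↦ ρ θ (τ, t)`. Since the
rotations compose additively, rotating the image by `α` shifts the angle `θ` by `α`; translating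
it by `d` only shifts the offset `τ` by the component of `d` along the direction `θ`, and a
translation does not change the modulus of a Fourier transform. Hence `M g θ = M f (θ - α)`,
so `C_g k = C_f (k - α)`, and the supremum over all shifts `k` is unchanged.
-/

open FourierTransform

theorem Real.norm_fourier_comp_sub_const {V E : Type*} [NormedAddCommGroup V]
    [InnerProductSpace ℝ V] [MeasurableSpace V] [BorelSpace V] [FiniteDimensional ℝ V]
    [NormedAddCommGroup E] [NormedSpace ℂ E] (f : V → E) (a w : V) :
    ‖𝓕 (fun v => f (v - a)) w‖ = ‖𝓕 f w‖ := by
  have h := VectorFourier.fourierIntegral_comp_add_right 𝐞 volume (innerₗ V) f (-a)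
  simp only [← sub_eq_add_neg] at h
  change ‖VectorFourier.fourierIntegral 𝐞 volume (innerₗ V) (f ∘ fun v => v - a) w‖ = _
  rw [h, Circle.norm_smul]
  rfl

theorem ρ_add (a b : ℝ) (p : ℝ × ℝ) : ρ (a + b) p = ρ a (ρ b p) := by
  simp only [ρ, Real.cos_add, Real.sin_add, Prod.mk.injEq]
  constructor <;> ring

theorem ρ_neg_self (a : ℝ) (p : ℝ × ℝ) : ρ a (ρ (-a) p) = p := by
  rw [← ρ_add, add_neg_cancel]
  simp [ρ]

theorem ρ_sub (a : ℝ) (p q : ℝ × ℝ) : ρ a p - ρ a q = ρ a (p - q) := by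
  simp only [ρ, Prod.mk_sub_mk, Prod.fst_sub, Prod.snd_sub, Prod.mk.injEq]
  constructor <;> ring

theorem Radon_eq_integral_ρ (f : ℝ × ℝ → ℝ) (θ τ : ℝ) :
    Radon f θ τ = ∫ t : ℝ, f (ρ θ (τ, t)) := rfl

theorem Radon_comp_ρ (f : ℝ × ℝ → ℝ) (β θ τ : ℝ) :
    Radon (f ∘ ρ β) θ τ = Radon f (β + θ) τ := by
  simp only [Radon_eq_integral_ρ, Function.comp_apply, ρ_add]

theorem Radon_comp_sub (f : ℝ × ℝ → ℝ) (d : ℝ × ℝ) (θ τ : ℝ) :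
    Radon (fun p => f (p - d)) θ τ = Radon f θ (τ - (ρ (-θ) d).1) := by
  have h : ∀ t, ρ θ (τ, t) - d = ρ θ (τ - (ρ (-θ) d).1, t - (ρ (-θ) d).2) := fun t => by
    conv_lhs => rw [← ρ_neg_self θ d]
    rw [ρ_sub]; rfl
  simp only [Radon_eq_integral_ρ, h]
  exact integral_sub_right_eq_self (fun t => f (ρ θ (τ - (ρ (-θ) d).1, t))) _

theorem TING_rototranslate (f : ℝ × ℝ → ℝ) (α : ℝ) (d : ℝ × ℝ) (θ ω : ℝ) :
    TING (fun p => f (ρ (-α) (p - d))) θ ω = TING f (θ - α) ω := by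
  have h : ∀ τ, Radon (fun p => f (ρ (-α) (p - d))) θ τ = Radon f (θ - α) (τ - (ρ (-θ) d).1) :=
    fun τ => by
      rw [← neg_add_eq_sub, ← Radon_comp_ρ]
      exact Radon_comp_sub (f ∘ ρ (-α)) d θ τ
  simp only [TING, h]
  exact Real.norm_fourier_comp_sub_const (fun τ => (Radon f (θ - α) τ : ℂ)) _ ω

theorem corrMap_rototranslate (f h : ℝ × ℝ → ℝ) (α : ℝ) (d : ℝ × ℝ) (k : ℝ) :
    corrMap (fun p => f (ρ (-α) (p - d))) h k = corrMap f h (k - α) := by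
  simp only [corrMap, TING_rototranslate, add_sub_assoc]

/-- Theorem 1, continuous form: RING is roto-translation invariant. -/
theorem RING_rototranslation_invariant (f h : ℝ × ℝ → ℝ) (α : ℝ) (d : ℝ × ℝ)
    (g : ℝ × ℝ → ℝ) (hg : ∀ p, g p = f (ρ (-α) (p - d))) :
    ⨆ k : ℝ, corrMap g h k = ⨆ k : ℝ, corrMap f h k := by
  obtain rfl : g = fun p => f (ρ (-α) (p - d)) := funext hg
  simp only [corrMap_rototranslate]
  exact (Equiv.subRight α).iSup_comp
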